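/- Let s ≥ 2 be an integer and r, n₁, n₂ positive integers coprime to s with gcd(nᵢ, r) = 1. If the s-cyclotomic cosets C_{s,r,n₁} and C_{s,r,n₂} are equal, then the functions ψ_{s,t,r,n₁} and ψ_{s,t,r,n₂} are scalar multiples of one another (for any t making r distinguished with respect to (s,t)). -/

import Mathlib

open Complex

/-- `β_{s,t}(k) = t·∑_{i=0}^{k-1} s^i`. -/
def beta (s t : ℤ) (k : ℕ) : ℤ := t * ∑ i ∈ Finset.range k, s ^ i

/-- The `s`-cyclotomic coset of `n` mod `r`: `C_{s,r,n} = {s^i·n mod r : i ∈ ℕ}`. -/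
def cyclCoset (s r n : ℕ) : Set ℕ := {c | ∃ i : ℕ, c = s ^ i * n % r}

/-- Coefficient sequence of `ψ_{s,t,r,n} = ∑_{j=1}^{ord_r(s)} ω^{n β_{s,t}(j)} G(ω^{n s^j})`. -/
noncomputable def psi (s : ℕ) (t : ℤ) (r : ℕ) (n : ℤ) (m : ℤ) : ℂ :=
  ∑ j ∈ Finset.Icc 1 (orderOf ((s : ZMod r))),
    Complex.exp (2 * Real.pi * Complex.I / r) ^ (n * beta s t j) *
      (Complex.exp (2 * Real.pi * Complex.I / r) ^ (n * (s : ℤ) ^ j)) ^ m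

lemma beta_succ (s t : ℤ) (k : ℕ) : beta s t (k + 1) = t + s * beta s t k := by
  simp only [beta, geom_sum_succ]; ring

lemma beta_succ' (s t : ℤ) (k : ℕ) : beta s t (k + 1) = beta s t k + t * s ^ k := by
  simp only [beta, Finset.sum_range_succ]; ring

/-- If two choices of representative give the same `s`-cyclotomic coset mod `r`, then the
corresponding functions `ψ` are scalar multiples of one another. -/
theorem psi_scalar_of_coset_eq (s : ℕ) (hs : 2 ≤ s) (t : ℤ) (r n₁ n₂ : ℕ)
    (hr : 0 < r) (hn₁ : 0 < n₁) (hn₂ : 0 < n₂)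
    (hcop : Nat.Coprime r s) (h₁ : Nat.Coprime n₁ r) (h₂ : Nat.Coprime n₂ r)
    (hdist : (r : ℤ) ∣ beta s t (orderOf ((s : ZMod r))))
    (hcoset : cyclCoset s r n₁ = cyclCoset s r n₂) :
    ∃ c : ℂ, c ≠ 0 ∧ ∀ m : ℤ, psi s t r n₂ m = c * psi s t r n₁ m := by
  haveI : NeZero r := ⟨hr.ne'⟩
  set ω : ℂ := Complex.exp (2 * Real.pi * Complex.I / r) with hωdef
  set d : ℕ := orderOf ((s : ZMod r)) with hddef
  have hωne : ω ≠ 0 := Complex.exp_ne_zero _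
  have hωr : ω ^ (r : ℤ) = 1 := by
    rw [hωdef, zpow_natCast, ← Complex.exp_nat_mul]
    have hrne : (r : ℂ) ≠ 0 := Nat.cast_ne_zero.2 hr.ne'
    have : (r : ℂ) * (2 * Real.pi * Complex.I / r) = 2 * Real.pi * Complex.I := by
      field_simp
    rw [this, Complex.exp_two_pi_mul_I]
  have hcong : ∀ a b : ℤ, (r : ℤ) ∣ a - b → ω ^ a = ω ^ b := by
    intro a b ⟨q, hq⟩
    have ha : a = b + r * q := by linarith
    rw [ha, zpow_add₀ hωne, zpow_mul, hωr, one_zpow, mul_one]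
  -- s has finite order mod r
  have hford : IsOfFinOrder ((s : ZMod r)) := by
    refine isOfFinOrder_iff_pow_eq_one.2 ⟨Nat.totient r, Nat.totient_pos.2 hr, ?_⟩
    have h := (Nat.ModEq.pow_totient (hcop.symm))
    have := (ZMod.natCast_eq_natCast_iff _ _ _).2 h
    push_cast at this
    exact this
  have hd1 : 1 ≤ d := hford.orderOf_pos
  have hsd : (r : ℤ) ∣ (s : ℤ) ^ d - 1 := by
    have h := pow_orderOf_eq_one ((s : ZMod r))
    have : (((s : ℤ) ^ d - 1 : ℤ) : ZMod r) = 0 := by push_cast; rw [hddef, pow_orderOf_eq_one]; ring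
    exact (ZMod.intCast_zmod_eq_zero_iff_dvd _ _).1 this
  -- psi depends only on n mod r
  have hmod : ∀ n n' m : ℤ, (r : ℤ) ∣ n - n' → psi s t r n m = psi s t r n' m := by
    intro n n' m hdvd
    simp only [psi, ← hωdef, ← hddef]
    refine Finset.sum_congr rfl fun j _ => ?_
    rw [hcong (n * beta s t j) (n' * beta s t j) (by
      have : n * beta s t j - n' * beta s t j = (n - n') * beta s t j := by ring
      rw [this]; exact hdvd.mul_right _),
      hcong (n * (s : ℤ) ^ j) (n' * (s : ℤ) ^ j) (by
      have : n * (s:ℤ) ^ j - n' * (s:ℤ) ^ j = (n - n') * (s:ℤ) ^ j := by ring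
      rw [this]; exact hdvd.mul_right _)]
  -- one-step shift
  have step : ∀ n m : ℤ, psi s t r (s * n) m = ω ^ (-(n * t)) * psi s t r n m := by
    intro n m
    set f : ℕ → ℂ := fun j => ω ^ (n * beta s t j) * (ω ^ (n * (s : ℤ) ^ j)) ^ m with hf
    have key : ∀ j : ℕ,
        ω ^ ((s : ℤ) * n * beta s t j) * (ω ^ ((s : ℤ) * n * (s : ℤ) ^ j)) ^ m
          = ω ^ (-(n * t)) * f (j + 1) := by
      intro j
      have h1 : (s : ℤ) * n * beta s t j = -(n * t) + n * beta s t (j + 1) := by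
        rw [beta_succ]; ring
      have h2 : (s : ℤ) * n * (s : ℤ) ^ j = n * (s : ℤ) ^ (j + 1) := by ring
      rw [h1, h2, zpow_add₀ hωne, hf, mul_assoc]
    have hper : f (d + 1) = f 1 := by
      simp only [hf]
      rw [hcong (n * beta s t (d + 1)) (n * beta s t 1) (by
          have : n * beta s t (d + 1) - n * beta s t 1 = n * (s : ℤ) * beta s t d := by
            rw [beta_succ]
            simp [beta]
            ring
          rw [this]; exact Dvd.dvd.mul_left hdist _),
        hcong (n * (s : ℤ) ^ (d + 1)) (n * (s : ℤ) ^ 1) (by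
          have : n * (s:ℤ) ^ (d + 1) - n * (s:ℤ) ^ 1 = ((s:ℤ) ^ d - 1) * (n * s) := by ring
          rw [this]; exact hsd.mul_right _)]
    simp only [psi, ← hωdef, ← hddef]
    have hL : ∀ j ∈ Finset.Icc 1 d,
        ω ^ ((s : ℤ) * n * beta s t j) * (ω ^ ((s : ℤ) * n * (s : ℤ) ^ j)) ^ m
          = ω ^ (-(n * t)) * f (j + 1) := fun j _ => key j
    calc ∑ j ∈ Finset.Icc 1 d, ω ^ ((s:ℤ) * n * beta s t j) * (ω ^ ((s:ℤ) * n * (s:ℤ) ^ j)) ^ m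
        = ∑ j ∈ Finset.Icc 1 d, ω ^ (-(n * t)) * f (j + 1) := Finset.sum_congr rfl hL
      _ = ω ^ (-(n * t)) * ∑ j ∈ Finset.Icc 1 d, f (j + 1) := by rw [Finset.mul_sum]
      _ = ω ^ (-(n * t)) * ∑ j ∈ Finset.Icc 1 d, f j := by
          congr 1
          obtain ⟨e, he⟩ : ∃ e, d = e + 1 := ⟨d - 1, by omega⟩
          rw [he] at hper ⊢
          rw [show Finset.Icc 1 (e + 1) = Finset.Ico 1 (e + 1 + 1) from (Finset.Ico_add_one_right_eq_Icc 1 (e+1)).symm,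
            Finset.sum_Ico_eq_sum_range, Finset.sum_Ico_eq_sum_range]
          have h2 : e + 1 + 1 - 1 = e + 1 := by omega
          rw [h2]
          rw [Finset.sum_range_succ, Finset.sum_range_succ']
          have h3 : f (1 + e + 1) = f (1 + 0) := by
            rw [show 1 + e + 1 = e + 1 + 1 by omega, hper]
          rw [h3]
          simp only [Nat.add_assoc]
      _ = ω ^ (-(n * t)) * ∑ j ∈ Finset.Icc 1 d, ω ^ (n * beta s t j) * (ω ^ (n * (s:ℤ) ^ j)) ^ m := rfl
  -- iterate
  have iter : ∀ (k : ℕ) (n m : ℤ),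
      psi s t r ((s : ℤ) ^ k * n) m = ω ^ (-(n * beta s t k)) * psi s t r n m := by
    intro k
    induction k with
    | zero => intro n m; simp [beta]
    | succ k ih =>
      intro n m
      have h : (s : ℤ) ^ (k + 1) * n = s * ((s : ℤ) ^ k * n) := by ring
      rw [h, step, ih, ← mul_assoc, ← zpow_add₀ hωne]
      congr 2
      rw [beta_succ']
      ring
  -- use coset equality
  have hmem : (n₂ % r) ∈ cyclCoset s r n₁ := by
    rw [hcoset]; exact ⟨0, by simp⟩
  obtain ⟨k, hk⟩ := hmem
  have hdvd : (r : ℤ) ∣ (s : ℤ) ^ k * n₁ - n₂ := by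
    have : n₂ ≡ s ^ k * n₁ [MOD r] := by
      unfold Nat.ModEq
      omega
    have := (Nat.modEq_iff_dvd).1 this
    push_cast at this ⊢
    convert this using 1
  refine ⟨ω ^ (-((n₁ : ℤ) * beta s t k)), zpow_ne_zero _ hωne, fun m => ?_⟩
  rw [← iter k n₁ m, hmod _ _ m (by rw [← neg_sub]; exact (dvd_neg.2 hdvd))]
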